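/- Let $n \geq 3$ be odd, $G = D_n = \langle x, y \mid x^n = y^2 = 1, y^{-1}xy = x^{-1}\rangle$, and consider the permutation action of $G$ on $\{1, \ldots, n\}$ where $x = (1\,2\,\cdots\,n)$ and $y$ reverses: $y(i) = n+1-i$ (mod $n$ convention fixing appropriate points). Let $I \subset \mathbb{Z}^n$ be the augmentation sublattice with basis $f_i = e_i - e_{i+1}$ ($1 \leq i \leq n-1$). Define $\varphi : \mathbb{Z}[G] \to I$ by sending the basis elements $\alpha_1,\ldots,\alpha_n,\beta_1,\ldots,\beta_n$ (with $x$-action cycling each block and $y : \alpha_i \leftrightarrow \beta_{n+1-i}$) to $\varphi(\alpha_i) = f_i$, $\varphi(\beta_i) = -f_i$ (where $f_n = -\sum_{i=1}^{n-1} f_i$). Then $\varphi$ is a surjective $G$-homomorphism whose kernel $C$ has $\mathbb{Z}$-basis $a_i = \alpha_i + \beta_i$ ($1 \leq i \leq n$), $b_1 = \sum_{i=1}^n \alpha_i$. -/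
import Mathlib


/-- For `n ≥ 3` odd and `G = D_n` acting on the `n` cosets (indexed by `ZMod n`,
`x : e_i ↦ e_{i+1}`, `y : e_i ↦ e_{1-i}`), the map `φ : ℤ[G] → I`,
`φ(α_i) = f_i`, `φ(β_i) = -f_i` (where `f_i = e_i - e_{i+1}` and the regular
representation basis `α_i, β_i` satisfies `x : α_i ↦ α_{i+1}, β_i ↦ β_{i+1}`,
`y : α_i ↦ β_{-i}, β_i ↦ α_{-i}`) is a surjective `G`-homomorphism whose kernel has
`ℤ`-basis `a_i = α_i + β_i` and `b₁ = Σ α_i`. -/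
theorem stmt_12 (n : ℕ) (hn : 3 ≤ n) (hodd : Odd n)
    (ρP : Representation ℤ (DihedralGroup n) ((ZMod n ⊕ ZMod n) → ℤ))
    (ρE : Representation ℤ (DihedralGroup n) (ZMod n → ℤ))
    (f : ZMod n → (ZMod n → ℤ))
    (hf : ∀ i, f i = Pi.single i 1 - Pi.single (i + 1) 1)
    (hEx : ∀ i, ρE (DihedralGroup.r 1) (Pi.single i 1) = Pi.single (i + 1) 1)
    (hEy : ∀ i, ρE (DihedralGroup.sr 0) (Pi.single i 1) = Pi.single (1 - i) 1)
    (hPxa : ∀ i : ZMod n, ρP (DihedralGroup.r 1) (Pi.single (Sum.inl i) 1) =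
      Pi.single (Sum.inl (i + 1)) 1)
    (hPxb : ∀ i : ZMod n, ρP (DihedralGroup.r 1) (Pi.single (Sum.inr i) 1) =
      Pi.single (Sum.inr (i + 1)) 1)
    (hPya : ∀ i : ZMod n, ρP (DihedralGroup.sr 0) (Pi.single (Sum.inl i) 1) =
      Pi.single (Sum.inr (-i)) 1)
    (hPyb : ∀ i : ZMod n, ρP (DihedralGroup.sr 0) (Pi.single (Sum.inr i) 1) =
      Pi.single (Sum.inl (-i)) 1)
    (φ : ((ZMod n ⊕ ZMod n) → ℤ) →ₗ[ℤ] (ZMod n → ℤ))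
    (hφa : ∀ i : ZMod n, φ (Pi.single (Sum.inl i) 1) = f i)
    (hφb : ∀ i : ZMod n, φ (Pi.single (Sum.inr i) 1) = -f i) :
    haveI : NeZero n := ⟨by omega⟩
    (∀ (g : DihedralGroup n) (w : (ZMod n ⊕ ZMod n) → ℤ),
        φ (ρP g w) = ρE g (φ w)) ∧
    LinearMap.range φ = Submodule.span ℤ (Set.range f) ∧
    ∀ B : (ZMod n ⊕ Unit) → ((ZMod n ⊕ ZMod n) → ℤ),
      (∀ i : ZMod n, B (Sum.inl i) = Pi.single (Sum.inl i) 1 + Pi.single (Sum.inr i) 1) →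
      (B (Sum.inr ()) = ∑ i : ZMod n, Pi.single (Sum.inl i) 1) →
      (∀ t, φ (B t) = 0) ∧ LinearIndependent ℤ B ∧
        Submodule.span ℤ (Set.range B) = LinearMap.ker φ := by
  haveI : NeZero n := ⟨by omega⟩
  classical
  -- expansion of an arbitrary vector in the standard basis
  have hw : ∀ w : (ZMod n ⊕ ZMod n) → ℤ,
      w = ∑ t : ZMod n ⊕ ZMod n, w t • Pi.single t 1 := by
    intro w
    conv_lhs => rw [← Finset.univ_sum_single w]
    refine Finset.sum_congr rfl fun t _ => ?_
    rw [← Pi.single_smul, smul_eq_mul, mul_one]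
  have hφw : ∀ w, φ w = ∑ i : ZMod n, (w (Sum.inl i) - w (Sum.inr i)) • f i := by
    intro w
    conv_lhs => rw [hw w, map_sum]
    rw [Fintype.sum_sum_type]
    simp only [map_smul, hφa, hφb, sub_smul, smul_neg, Finset.sum_sub_distrib,
      Finset.sum_neg_distrib, sub_eq_add_neg, add_smul, neg_smul, Finset.sum_add_distrib]
  -- key computation: ∑ d i • f i is the "difference" function
  have h1 : ∀ d : ZMod n → ℤ,
      ∑ i : ZMod n, d i • f i = fun j => d j - d (j - 1) := by
    intro d
    simp only [hf, smul_sub]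
    rw [Finset.sum_sub_distrib]
    have e1 : ∑ i : ZMod n, d i • Pi.single i (1 : ℤ)
        = ∑ i : ZMod n, Pi.single i (d i) := by
      refine Finset.sum_congr rfl fun i _ => ?_
      rw [← Pi.single_smul, smul_eq_mul, mul_one]
    have e2 : ∑ i : ZMod n, d i • Pi.single (i + 1) (1 : ℤ)
        = ∑ i : ZMod n, Pi.single i (d (i - 1)) := by
      have e2' : ∑ i : ZMod n, d i • Pi.single (i + 1) (1 : ℤ)
          = ∑ i : ZMod n, (Pi.single (i + 1) (d i) : ZMod n → ℤ) := by
        refine Finset.sum_congr rfl fun i _ => ?_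
        rw [← Pi.single_smul, smul_eq_mul, mul_one]
      rw [e2']
      refine Fintype.sum_equiv (Equiv.addRight (1 : ZMod n)) _ _ fun i => ?_
      simp [add_sub_cancel_right]
    rw [e1, e2, Finset.univ_sum_single, Finset.univ_sum_single]
    rfl
  have hφfun : ∀ w, φ w = fun j =>
      (w (Sum.inl j) - w (Sum.inr j)) - (w (Sum.inl (j - 1)) - w (Sum.inr (j - 1))) := by
    intro w
    rw [hφw w, h1]
  -- Part 1 : equivariance
  have ext2 : ∀ g : DihedralGroup n,
      (∀ t, φ (ρP g (Pi.single t 1)) = ρE g (φ (Pi.single t 1))) →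
      ∀ w, φ (ρP g w) = ρE g (φ w) := by
    intro g h w
    have heq : φ ∘ₗ (ρP g) = (ρE g) ∘ₗ φ := by
      refine (Pi.basisFun ℤ _).ext fun t => ?_
      simpa [Pi.basisFun_apply] using h t
    simpa using LinearMap.congr_fun heq w
  have hx : ∀ w, φ (ρP (DihedralGroup.r 1) w) = ρE (DihedralGroup.r 1) (φ w) := by
    refine ext2 _ ?_
    rintro (i | i)
    · rw [hPxa, hφa, hφa, hf, hf, map_sub, hEx, hEx]
    · rw [hPxb, hφb, hφb, map_neg, hf, hf, map_sub, hEx, hEx]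
  have hy : ∀ w, φ (ρP (DihedralGroup.sr 0) w) = ρE (DihedralGroup.sr 0) (φ w) := by
    refine ext2 _ ?_
    have e : ∀ i : ZMod n, (-i + 1 : ZMod n) = 1 - i := by intro i; ring
    have e' : ∀ i : ZMod n, (-i : ZMod n) = 1 - (i + 1) := by intro i; ring
    rintro (i | i)
    · rw [hPya, hφb, hφa, hf (-i), hf i, map_sub, hEy, hEy, neg_sub, e, e']
    · rw [hPyb, hφa, hφb, map_neg, hf (-i), hf i, map_sub, hEy, hEy, neg_sub, e, e']
  have hmul : ∀ g₁ g₂ : DihedralGroup n,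
      (∀ w, φ (ρP g₁ w) = ρE g₁ (φ w)) → (∀ w, φ (ρP g₂ w) = ρE g₂ (φ w)) →
      ∀ w, φ (ρP (g₁ * g₂) w) = ρE (g₁ * g₂) (φ w) := by
    intro g₁ g₂ h₁ h₂ w
    rw [map_mul, map_mul, Module.End.mul_apply, Module.End.mul_apply, h₁, h₂]
  have hone : ∀ w, φ (ρP 1 w) = ρE 1 (φ w) := by
    intro w; rw [map_one, map_one, Module.End.one_apply, Module.End.one_apply]
  have hpow : ∀ k : ℕ, ∀ w,
      φ (ρP (DihedralGroup.r 1 ^ k) w) = ρE (DihedralGroup.r 1 ^ k) (φ w) := by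
    intro k
    induction k with
    | zero => simpa using hone
    | succ k ih =>
      intro w
      rw [pow_succ]
      exact hmul _ _ ih hx w
  have comm : ∀ (g : DihedralGroup n) (w : (ZMod n ⊕ ZMod n) → ℤ),
      φ (ρP g w) = ρE g (φ w) := by
    intro g
    match g with
    | DihedralGroup.r i =>
      have : DihedralGroup.r (i : ZMod n) = DihedralGroup.r 1 ^ i.val := by
        rw [DihedralGroup.r_one_pow, ZMod.natCast_val, ZMod.cast_id]
      rw [this]; exact hpow i.val
    | DihedralGroup.sr i =>
      have : DihedralGroup.sr (i : ZMod n) = DihedralGroup.sr 0 * DihedralGroup.r 1 ^ i.val := by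
        rw [DihedralGroup.r_one_pow, DihedralGroup.sr_mul_r, zero_add,
          ZMod.natCast_val, ZMod.cast_id]
      rw [this]; exact hmul _ _ hy (hpow i.val)
  refine ⟨comm, ?_, ?_⟩
  -- Part 2 : range
  · apply le_antisymm
    · rintro x ⟨w, rfl⟩
      rw [hφw w]
      exact Submodule.sum_mem _ fun i _ =>
        Submodule.smul_mem _ _ (Submodule.subset_span ⟨i, rfl⟩)
    · rw [Submodule.span_le]
      rintro x ⟨i, rfl⟩
      exact ⟨Pi.single (Sum.inl i) 1, hφa i⟩
  -- Part 3 : kernel basis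
  · intro B hBa hBb
    have hsumf : ∑ i : ZMod n, f i = 0 := by
      have := h1 (fun _ => (1 : ℤ))
      simp only [one_smul] at this
      rw [this]
      funext j; simp
    have hφB : ∀ t, φ (B t) = 0 := by
      rintro (i | ⟨⟩)
      · rw [hBa, map_add, hφa, hφb, add_neg_cancel]
      · rw [hBb, map_sum]
        simp only [hφa]
        exact hsumf
    refine ⟨hφB, ?_, ?_⟩
    · -- linear independence
      rw [Fintype.linearIndependent_iff]
      intro g hg
      have hval : ∀ s : ZMod n ⊕ ZMod n, (∑ t, g t • B t) s = 0 := by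
        intro s; rw [hg]; rfl
      have hr : ∀ j : ZMod n, g (Sum.inl j) = 0 := by
        intro j
        have h := hval (Sum.inr j)
        rw [Finset.sum_apply, Fintype.sum_sum_type] at h
        simpa [hBa, hBb, Finset.sum_apply, Pi.single_apply] using h
      have hu : g (Sum.inr ()) = 0 := by
        have h := hval (Sum.inl 0)
        rw [Finset.sum_apply, Fintype.sum_sum_type] at h
        simp [hBa, hBb, Finset.sum_apply, Pi.single_apply, hr] at h
        exact h
      rintro (j | ⟨⟩)
      · exact hr j
      · exact hu
    · -- span = kernel
      apply le_antisymm
      · rw [Submodule.span_le]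
        rintro x ⟨t, rfl⟩
        exact hφB t
      · intro w hwk
        have hker : φ w = 0 := hwk
        set c : ZMod n → ℤ := fun i => w (Sum.inl i) - w (Sum.inr i) with hcdef
        have hstep : ∀ j : ZMod n, c j = c (j - 1) := by
          intro j
          have h := congrFun (hφfun w) j
          rw [hker] at h
          have h0 : (0 : ZMod n → ℤ) j = 0 := rfl
          rw [h0] at h
          have := h.symm
          simpa [hcdef, sub_eq_zero] using this
        have hnat : ∀ k : ℕ, c ((k : ℕ) : ZMod n) = c 0 := by
          intro k
          induction k with
          | zero => norm_num
          | succ k ih =>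
            have h := hstep ((k + 1 : ℕ) : ZMod n)
            rw [h]
            push_cast
            simpa [add_sub_cancel_right] using ih
        have hconst : ∀ i : ZMod n, c i = c 0 := by
          intro i
          have := hnat i.val
          rwa [ZMod.natCast_val, ZMod.cast_id] at this
        have hrep : w = (∑ i : ZMod n, w (Sum.inr i) • B (Sum.inl i))
            + (w (Sum.inl 0) - w (Sum.inr 0)) • B (Sum.inr ()) := by
          funext s
          cases s with
          | inl j =>
            have hcj := hconst j
            simp only [hcdef] at hcj
            simp [hBa, hBb, Finset.sum_apply, Pi.single_apply]
            linarith
          | inr j =>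
            simp [hBa, hBb, Finset.sum_apply, Pi.single_apply]
        rw [hrep]
        exact add_mem
          (Submodule.sum_mem _ fun i _ =>
            Submodule.smul_mem _ _ (Submodule.subset_span ⟨Sum.inl i, rfl⟩))
          (Submodule.smul_mem _ _ (Submodule.subset_span ⟨Sum.inr (), rfl⟩))
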